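/- There exists a dynamical system (X,f) such that ω(x) is a single fixed point for every x ∈ X, yet (X,f) is not a factor of any finite automaton. Concretely, let M ⊆ ℕ be a set of positive integers such that the unary language {0^m : m ∈ M} is not regular, and let X = {u ∈ {0,1,2}^ℤ : u is nondecreasing (i < j ⟹ u_i ≤ u_j), and whenever the block 0 1^m 2 occurs as a consecutive substring of u then m ∈ M}, with the shift σ(u)_i = u_{i+1}. Then X is a closed shift-invariant subset of {0,1,2}^ℤ, for every x ∈ X the ω-limit set ω(x) is one of the fixed points (the constant sequences of 0's, 1's, or 2's), and (X,σ) is not clopen-regular; in particular (X,σ) is not a factor of any finite automaton. -/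

import Mathlib

open Set Function Topology

/-- The ω-limit set of a set `A` under `f`: `ω(A) = ⋂ₙ closure (⋃_{m>n} f^m(A))`. -/
def omegaSet {X : Type*} [TopologicalSpace X] (f : X → X) (A : Set X) : Set X :=
  ⋂ n : ℕ, closure (⋃ m : ℕ, ⋃ _ : n < m, f^[m] '' A)

/-- A dynamical system is chaotic if its periodic points are dense and it is
topologically transitive. -/
def IsChaotic {X : Type*} [TopologicalSpace X] (f : X → X) : Prop :=
  Dense {x : X | ∃ n : ℕ, 0 < n ∧ f^[n] x = x} ∧
  ∀ U V : Set X, IsOpen U → IsOpen V → U.Nonempty → V.Nonempty →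
    ∃ k : ℕ, 0 < k ∧ (f^[k] '' U ∩ V).Nonempty

/-- `f` restricted to the invariant set `S` is a chaotic dynamical system. -/
def ChaoticOn {X : Type*} [TopologicalSpace X] (f : X → X) (S : Set X) : Prop :=
  ∃ h : MapsTo f S S, IsChaotic (MapsTo.restrict f S S h)

/-- A system has chaotic limits if every point belongs to a set whose ω-limit set is
a chaotic system. -/
def HasChaoticLimits {X : Type*} [TopologicalSpace X] (f : X → X) : Prop :=
  ∀ x : X, ∃ A : Set X, x ∈ A ∧ ChaoticOn f (omegaSet f A)
/-- The discontinuum over `A, Q, B`: two-sided sequences with letters from `A` at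
positive coordinates, a letter from `Q` at coordinate `0`, and letters from `B` at
negative coordinates. -/
def Discontinuum (A Q B : Type*) : Type _ :=
  {u : ℤ → A ⊕ Q ⊕ B //
    (∀ i : ℤ, 0 < i → ∃ a : A, u i = Sum.inl a) ∧
    (∃ q : Q, u 0 = Sum.inr (Sum.inl q)) ∧
    (∀ i : ℤ, i < 0 → ∃ b : B, u i = Sum.inr (Sum.inr b))}

/-- The topology of the discontinuum: the product topology of the discrete topologies,
i.e. the topology of the metric ρ(u,v) = 2^{-inf{i ≥ 0 : uᵢ ≠ vᵢ or u₋ᵢ ≠ v₋ᵢ}}. -/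
instance (A Q B : Type*) : TopologicalSpace (Discontinuum A Q B) := by
  letI : TopologicalSpace (A ⊕ Q ⊕ B) := ⊥
  unfold Discontinuum
  infer_instance

/-- The inner state of the automaton, i.e. the coordinate `u 0`. -/
noncomputable def Discontinuum.state {A Q B : Type*} (u : Discontinuum A Q B) : Q :=
  u.2.2.1.choose

/-- The next input symbol, i.e. the coordinate `u 1`. -/
noncomputable def Discontinuum.input {A Q B : Type*} (u : Discontinuum A Q B) : A :=
  (u.2.1 1 one_pos).choose

/-- The dynamical system of a finite automaton with input function `fA` and output
function `fB`: it reads a symbol from the input tape, changes its state, and writes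
a symbol to the output tape. -/
noncomputable def autMap {A Q B : Type*} (fA : Q × A → Q) (fB : Q → B)
    (u : Discontinuum A Q B) : Discontinuum A Q B :=
  ⟨fun i =>
    if i = -1 then Sum.inr (Sum.inr (fB u.state))
    else if i = 0 then Sum.inr (Sum.inl (fA (u.state, u.input)))
    else u.1 (i + 1), by
      refine ⟨fun i hi => ?_, ?_, fun i hi => ?_⟩
      · beta_reduce
        rw [if_neg (by omega), if_neg (by omega)]
        exact u.2.1 (i + 1) (by omega)
      · exact ⟨fA (u.state, u.input), by beta_reduce; rw [if_neg (by norm_num), if_pos rfl]⟩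
      · by_cases h : i = -1
        · exact ⟨fB u.state, by beta_reduce; rw [if_pos h]⟩
        · beta_reduce
          rw [if_neg h, if_neg (by omega)]
          exact u.2.2.2 (i + 1) (by omega)⟩

/-- A dynamical system `g` is a factor of a finite automaton if there are nonempty
finite sets `A, Q, B`, input and output functions `fA, fB`, and a continuous
surjection `φ` from the corresponding finite automaton onto `(Y, g)` with
`g ∘ φ = φ ∘ f`. -/
def IsFactorOfFiniteAutomaton {Y : Type*} [TopologicalSpace Y] (g : Y → Y) : Prop :=
  ∃ (A Q B : Type) (_ : Fintype A) (_ : Fintype Q) (_ : Fintype B)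
    (_ : Nonempty A) (_ : Nonempty Q) (_ : Nonempty B)
    (fA : Q × A → Q) (fB : Q → B) (φ : Discontinuum A Q B → Y),
    Continuous φ ∧ Surjective φ ∧ g ∘ φ = φ ∘ autMap fA fB
/-- The language generated by a family `α` of subsets of `X`: all finite words
`u ∈ α*` such that some `x ∈ X` has itinerary `u`, i.e. `f^i(x) ∈ uᵢ` for `i < |u|`. -/
def genLanguage {X : Type*} (f : X → X) (α : Set (Set X)) : Language ↥α :=
  {w : List ↥α | ∃ x : X, ∀ i : Fin w.length, f^[(i : ℕ)] x ∈ (w.get i : Set X)}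

/-- A dynamical system is clopen-regular if the language generated by every finite
clopen cover is regular. -/
def ClopenRegular {X : Type*} [TopologicalSpace X] (f : X → X) : Prop :=
  ∀ α : Set (Set X), α.Finite → (∀ S ∈ α, IsClopen S) → ⋃₀ α = Set.univ →
    (genLanguage f α).IsRegular

/-!
The points of the subshift are nondecreasing sequences over `{0, 1, 2}`, hence eventually
constant, so every forward orbit converges to a constant sequence, which is then the whole
ω-limit set.

For the partition by the coordinate `0`, a point has itinerary `0 1^m 2` exactly when the block
`0 1^m 2` occurs, i.e. when `m ∈ M`; a regular itinerary language would therefore make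
`{0^m : m ∈ M}` regular. On the other hand every factor of a finite automaton is
clopen-regular: itineraries pull back along the factor map, a clopen set of the discontinuum
only depends on a finite window of coordinates, and by Myhill–Nerode the left quotient of the
itinerary language by a word only depends on the finitely many windows reachable along it,
because the unread input can be replaced at will.
-/

namespace Language

variable {α β : Type*}

theorem IsRegular.preimage_append_map_append {L : Language α} (hL : L.IsRegular) (g : β → α)
    (p s : List α) : Language.IsRegular {u : List β | p ++ u.map g ++ s ∈ L} := by
  rw [isRegular_iff_finite_range_leftQuotient] at hL
  refine isRegular_iff_finite_range_leftQuotient.2 <|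
    (hL.image fun K : Language α => ({v | v.map g ++ s ∈ K} : Language β)).subset ?_
  rintro _ ⟨u, rfl⟩
  refine ⟨_, ⟨p ++ u.map g, rfl⟩, ?_⟩
  ext v
  change (p ++ u.map g) ++ (v.map g ++ s) ∈ L ↔ p ++ (u ++ v).map g ++ s ∈ L
  simp only [List.map_append, List.append_assoc]

end Language

section Itinerary

variable {X Y ι : Type*}

def itinerarySet (f : X → X) (U : ι → Set X) : List ι → Set X
  | [] => univ
  | c :: w => U c ∩ f ⁻¹' itinerarySet f U w

def itineraryLanguage (f : X → X) (U : ι → Set X) : Language ι :=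
  {w | (itinerarySet f U w).Nonempty}

variable {f : X → X} {U : ι → Set X}

theorem mem_itinerarySet_iff {w : List ι} {x : X} :
    x ∈ itinerarySet f U w ↔ ∀ i : Fin w.length, f^[i] x ∈ U (w.get i) := by
  induction w generalizing x with
  | nil => simp [itinerarySet]
  | cons c w ih =>
    simp [itinerarySet, ih, Fin.forall_fin_succ]

theorem genLanguage_eq_itineraryLanguage (f : X → X) (α : Set (Set X)) :
    genLanguage f α = itineraryLanguage f ((↑) : α → Set X) := by
  ext w
  simp [genLanguage, itineraryLanguage, Set.Nonempty, mem_itinerarySet_iff]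

theorem itinerarySet_append (w v : List ι) :
    itinerarySet f U (w ++ v) = itinerarySet f U w ∩ f^[w.length] ⁻¹' itinerarySet f U v := by
  induction w with
  | nil => simp [itinerarySet]
  | cons c w ih =>
    simp only [List.cons_append, itinerarySet, ih, List.length_cons, iterate_succ,
      preimage_comp, preimage_inter, inter_assoc]

theorem mem_itinerarySet_replicate {c : ι} {m : ℕ} {x : X} :
    x ∈ itinerarySet f U (List.replicate m c) ↔ ∀ j < m, f^[j] x ∈ U c := by
  induction m generalizing x with
  | zero => simp [itinerarySet]
  | succ m ih =>
    simp only [List.replicate_succ, itinerarySet, mem_inter_iff, mem_preimage, ih,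
      Nat.forall_lt_succ_left', iterate_succ_apply, iterate_zero_apply]

theorem preimage_itinerarySet {g : Y → Y} {φ : X → Y} (h : Semiconj φ f g) (U : ι → Set Y)
    (w : List ι) : φ ⁻¹' itinerarySet g U w = itinerarySet f (fun c => φ ⁻¹' U c) w := by
  induction w with
  | nil => rfl
  | cons c w ih =>
    rw [itinerarySet, itinerarySet, preimage_inter, ← ih, ← preimage_comp, ← preimage_comp,
      h.comp_eq]

theorem itineraryLanguage_of_semiconj {g : Y → Y} {φ : X → Y} (hφ : Surjective φ)
    (h : Semiconj φ f g) (U : ι → Set Y) :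
    itineraryLanguage g U = itineraryLanguage f (fun c => φ ⁻¹' U c) := by
  ext w
  simp only [itineraryLanguage, ← preimage_itinerarySet h,
    hφ.nonempty_preimage]

/-- Myhill–Nerode: the left quotient by `w` only depends on the `π`-image of the points reached
along `w`. -/
theorem isRegular_itineraryLanguage_of_finite {W : Type*} [Finite W] (π : X → W)
    (h : ∀ (w : List ι) (y y' : X), y ∈ f^[w.length] '' itinerarySet f U w → π y = π y' →
      ∃ y'' ∈ f^[w.length] '' itinerarySet f U w,
        ∀ v, y' ∈ itinerarySet f U v → y'' ∈ itinerarySet f U v) :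
    (itineraryLanguage f U).IsRegular := by
  rw [Language.isRegular_iff_finite_range_leftQuotient]
  refine (Set.finite_range fun P : Set W =>
    ({v | ∃ y, π y ∈ P ∧ y ∈ itinerarySet f U v} : Language ι)).subset ?_
  rintro _ ⟨w, rfl⟩
  refine ⟨π '' (f^[w.length] '' itinerarySet f U w), ?_⟩
  ext v
  change _ ↔ (itinerarySet f U (w ++ v)).Nonempty
  rw [itinerarySet_append]
  constructor
  swap
  · rintro ⟨x, hx, hxv⟩
    exact ⟨_, mem_image_of_mem π (mem_image_of_mem _ hx), hxv⟩
  · rintro ⟨y', ⟨y, hy, hyy'⟩, hy'⟩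
    obtain ⟨_, ⟨x, hx, rfl⟩, hx'⟩ := h w y y' hy hyy'
    exact ⟨x, hx, hx' v hy'⟩

end Itinerary

section Cylinders

variable {ι β X : Type*} [TopologicalSpace β]

theorem isClosed_setOf_of_eqOn [DiscreteTopology β] {p : (ι → β) → Prop} (I : Finset ι)
    (h : ∀ u v, EqOn u v I → p u → p v) : IsClosed {u | p u} := by
  rw [← isOpen_compl_iff, isOpen_pi_iff]
  intro u hu
  exact ⟨I, fun i => {u i}, fun i _ => ⟨isOpen_discrete _, rfl⟩,
    fun v hv hpv => hu (h v u (fun i hi => hv i hi) hpv)⟩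

variable [TopologicalSpace X] {e : X → ℤ → β}

theorem exists_eqOn_Icc_subset (he : IsInducing e) {s : Set X} (hs : IsOpen s) {x : X}
    (hx : x ∈ s) : ∃ n : ℕ, {y | EqOn (e y) (e x) (Icc (-n : ℤ) n)} ⊆ s := by
  obtain ⟨t, ht, rfl⟩ := he.isOpen_iff.1 hs
  obtain ⟨I, u, hu, hIu⟩ := isOpen_pi_iff.1 ht (e x) hx
  refine ⟨I.sup Int.natAbs, fun y hy => hIu fun i hi => ?_⟩
  have : Int.natAbs i ≤ I.sup Int.natAbs := Finset.le_sup hi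
  rw [hy ⟨by omega, by omega⟩]
  exact (hu i hi).2

theorem isOpen_setOf_eqOn_Icc [DiscreteTopology β] (he : Continuous e) (x : X) (n : ℕ) :
    IsOpen {y | EqOn (e y) (e x) (Icc (-n : ℤ) n)} := by
  simp only [EqOn, ofPred_forall]
  exact (finite_Icc _ _).isOpen_biInter fun j _ =>
    (isOpen_discrete {e x j}).preimage ((continuous_apply j).comp he)

theorem IsClopen.exists_eqOn_Icc_iff [DiscreteTopology β] [CompactSpace X] (he : IsInducing e)
    {U : Set X} (hU : IsClopen U) :
    ∃ N : ℕ, ∀ x y, EqOn (e x) (e y) (Icc (-N : ℤ) N) → (x ∈ U ↔ y ∈ U) := by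
  have hloc : ∀ x, ∃ n : ℕ, ∀ y, EqOn (e y) (e x) (Icc (-n : ℤ) n) → (y ∈ U ↔ x ∈ U) := by
    intro x
    by_cases hx : x ∈ U
    · obtain ⟨n, hn⟩ := exists_eqOn_Icc_subset he hU.isOpen hx
      exact ⟨n, fun y hy => iff_of_true (hn hy) hx⟩
    · obtain ⟨n, hn⟩ := exists_eqOn_Icc_subset he hU.compl.isOpen hx
      exact ⟨n, fun y hy => iff_of_false (hn hy) hx⟩
  choose n hn using hloc
  obtain ⟨t, ht⟩ := isCompact_univ.elim_nhds_subcover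
    (fun x => {y | EqOn (e y) (e x) (Icc (-n x : ℤ) (n x))})
    fun x _ => (isOpen_setOf_eqOn_Icc he.continuous x (n x)).mem_nhds fun _ _ => rfl
  refine ⟨t.sup n, fun y y' hyy' => ?_⟩
  obtain ⟨x, hxt, hyx⟩ := mem_iUnion₂.1 (ht.2 (mem_univ y))
  have hle : (n x : ℤ) ≤ t.sup n := by exact_mod_cast Finset.le_sup hxt
  have hy'x : EqOn (e y') (e x) (Icc (-n x : ℤ) (n x)) := fun j hj =>
    (hyy' ⟨by linarith [hj.1], by linarith [hj.2]⟩).symm.trans (hyx hj)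
  rw [hn x y hyx, hn x y' hy'x]

end Cylinders

section OmegaLimit

open Filter

variable {X : Type*} [TopologicalSpace X]

theorem omegaSet_eq_omegaLimit (f : X → X) (A : Set X) :
    omegaSet f A = omegaLimit atTop (fun m x => f^[m] x) A := by
  have himage : ∀ n,
      (⋃ m, ⋃ _ : n < m, f^[m] '' A) = image2 (fun m x => f^[m] x) (Ioi n) A := by
    intro n
    ext y
    simp [image2]
  apply Subset.antisymm
  · refine subset_iInter₂ fun u hu => ?_
    obtain ⟨n, hn⟩ := mem_atTop_sets.1 hu
    refine iInter_subset_of_subset n (closure_mono ?_)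
    rw [himage]
    exact image2_subset_right fun m hm => hn m (le_of_lt hm)
  · refine subset_iInter fun n => ?_
    rw [himage]
    exact biInter_subset_of_mem (Ioi_mem_atTop n)

theorem omegaSet_singleton_of_tendsto [T2Space X] {f : X → X} {x p : X}
    (h : Tendsto (fun m => f^[m] x) atTop (𝓝 p)) : omegaSet f {x} = {p} := by
  ext y
  rw [omegaSet_eq_omegaLimit, mem_omegaLimit_singleton_iff_mapClusterPt, mem_singleton_iff]
  refine ⟨fun hy => ?_, ?_⟩
  · exact eq_of_nhds_neBot (ClusterPt.mono hy h)
  · rintro rfl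
    exact h.mapClusterPt

end OmegaLimit

section Shift

open Filter

variable {β : Type*}

theorem shift_iterate_apply (x : ℤ → β) (n : ℕ) (i : ℤ) :
    (fun (u : ℤ → β) (i : ℤ) => u (i + 1))^[n] x i = x (i + n) := by
  induction n generalizing x with
  | zero => simp
  | succ n ih =>
    rw [iterate_succ_apply, ih]
    push_cast
    ring_nf

theorem tendsto_shift_iterate [TopologicalSpace β] {x : ℤ → β} {c : β}
    (hx : ∀ᶠ j in atTop, x j = c) :
    Tendsto (fun n => (fun (u : ℤ → β) (i : ℤ) => u (i + 1))^[n] x) atTop (𝓝 fun _ => c) := by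
  refine tendsto_pi_nhds.2 fun i => tendsto_const_nhds.congr' ?_
  have : Tendsto (fun n : ℕ => i + n) atTop atTop :=
    tendsto_atTop_add_const_left _ i tendsto_natCast_atTop_atTop
  filter_upwards [this.eventually hx] with n hn
  rw [shift_iterate_apply, hn]

theorem Monotone.exists_eventually_eq [PartialOrder β] [WellFoundedGT β] {x : ℤ → β}
    (hx : Monotone x) : ∃ c, ∀ᶠ j in atTop, x j = c := by
  obtain ⟨n, hn⟩ := WellFoundedGT.monotone_chain_condition
    ⟨fun n : ℕ => x n, fun a b h => hx (by exact_mod_cast h)⟩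
  refine ⟨x n, eventually_atTop.2 ⟨n, fun j hj => ?_⟩⟩
  lift j to ℕ using (Int.natCast_nonneg n).trans hj
  exact (hn j (by exact_mod_cast hj)).symm

end Shift

section BlockSubshift

variable (M : Set ℕ)

def blockSubshift : Set (ℤ → Fin 3) :=
  {u | (∀ i j : ℤ, i < j → u i ≤ u j) ∧
    ∀ (i : ℤ) (m : ℕ), u i = 0 → (∀ j : ℕ, 1 ≤ j → j ≤ m → u (i + (j : ℤ)) = 1) →
      u (i + (m : ℤ) + 1) = 2 → m ∈ M}

theorem isClosed_blockSubshift : IsClosed (blockSubshift M) := by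
  have hmono : IsClosed (⋂ (i : ℤ) (j : ℤ), {u : ℤ → Fin 3 | i < j → u i ≤ u j}) :=
    isClosed_iInter fun i => isClosed_iInter fun j =>
      isClosed_setOf_of_eqOn {i, j} fun u v huv hu hij => by
        rw [← huv (by simp), ← huv (by simp)]
        exact hu hij
  have hblock : IsClosed (⋂ (i : ℤ) (m : ℕ), {u : ℤ → Fin 3 | u i = 0 →
      (∀ j : ℕ, 1 ≤ j → j ≤ m → u (i + (j : ℤ)) = 1) → u (i + (m : ℤ) + 1) = 2 → m ∈ M}) :=
    isClosed_iInter fun i => isClosed_iInter fun m =>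
      isClosed_setOf_of_eqOn (Finset.Icc i (i + m + 1)) fun u v huv hu h0 h1 h2 => by
        refine hu ?_ (fun j hj hjm => ?_) ?_
        · rwa [huv (by simp; omega)]
        · rw [huv (by simp; omega)]
          exact h1 j hj hjm
        · rwa [huv (by simp; omega)]
  convert hmono.inter hblock using 1
  ext u
  simp [blockSubshift]

theorem mapsTo_shift_blockSubshift :
    MapsTo (fun (u : ℤ → Fin 3) (i : ℤ) => u (i + 1)) (blockSubshift M) (blockSubshift M) := by
  rintro u ⟨hmono, hblock⟩
  refine ⟨fun i j hij => hmono _ _ (by omega), fun i m h0 h1 h2 => hblock (i + 1) m h0 ?_ ?_⟩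
  · intro j hj hjm
    rw [add_right_comm]
    exact h1 j hj hjm
  · rwa [add_right_comm _ 1, add_right_comm _ 1]

def staircase (m : ℕ) (j : ℤ) : Fin 3 :=
  if j ≤ 0 then 0 else if j ≤ m then 1 else 2

theorem staircase_mem_blockSubshift {m : ℕ} (hm : m ∈ M) : staircase m ∈ blockSubshift M := by
  have h0 : ∀ {j}, staircase m j = 0 → j ≤ 0 := by
    intro j; unfold staircase; split_ifs <;> simp_all
  have h1 : ∀ {j}, staircase m j = 1 → 0 < j ∧ j ≤ m := by
    intro j; unfold staircase; split_ifs <;> simp_all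
  have h2 : ∀ {j}, staircase m j = 2 → (m : ℤ) < j := by
    intro j; unfold staircase; split_ifs <;> simp_all
  refine ⟨fun i j hij => ?_, fun i k hstart hrun hend => ?_⟩
  · unfold staircase
    split_ifs <;> first | decide | omega
  · have := h0 hstart
    have := h2 hend
    obtain rfl : k = m := by
      rcases Nat.eq_zero_or_pos k with rfl | hk
      · push_cast at *
        omega
      · have := h1 (hrun 1 le_rfl hk)
        have := h1 (hrun k hk le_rfl)
        omega
    exact hm

theorem exists_block_mem_blockSubshift_iff {m : ℕ} :
    (∃ u ∈ blockSubshift M, u 0 = 0 ∧ (∀ j < m, u (j + 1) = 1) ∧ u (m + 1) = 2) ↔ m ∈ M := by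
  constructor
  · rintro ⟨u, ⟨-, hblock⟩, h0, h1, h2⟩
    refine hblock 0 m h0 (fun j hj hjm => ?_) (by simpa using h2)
    obtain ⟨k, rfl⟩ := Nat.exists_eq_add_of_le' hj
    simpa [add_comm] using h1 k (by omega)
  · intro hm
    refine ⟨staircase m, staircase_mem_blockSubshift M hm, by simp [staircase],
      fun j hj => ?_, ?_⟩ <;> simp only [staircase]
    · rw [if_neg (by omega), if_pos (by omega)]
    · rw [if_neg (by omega), if_neg (by omega)]

theorem not_clopenRegular_blockSubshift
    (hM : ¬ Language.IsRegular {w : List Unit | w.length ∈ M})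
    (h : MapsTo (fun (u : ℤ → Fin 3) (i : ℤ) => u (i + 1)) (blockSubshift M)
      (blockSubshift M)) :
    ¬ ClopenRegular (h.restrict _ _ _) := by
  intro hreg
  set F := h.restrict _ _ _
  let S : Fin 3 → Set (blockSubshift M) := fun k => {x | x.1 0 = k}
  have hS : ∀ (n : ℕ) (k : Fin 3) (x : blockSubshift M),
      F^[n] (F x) ∈ S k ↔ x.1 (n + 1) = k := by
    intro n k x
    change (F^[n + 1] x).1 0 = k ↔ _
    rw [h.coe_iterate_restrict, shift_iterate_apply, zero_add, Nat.cast_succ]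
  have hclopen : ∀ T ∈ range S, IsClopen T := by
    rintro _ ⟨k, rfl⟩
    exact (isClopen_discrete {k}).preimage ((continuous_apply 0).comp continuous_subtype_val)
  have hL := hreg (range S) (finite_range S) hclopen
    (eq_univ_of_forall fun x => ⟨S (x.1 0), ⟨_, rfl⟩, rfl⟩)
  rw [genLanguage_eq_itineraryLanguage] at hL
  let a : Fin 3 → range S := fun k => ⟨S k, k, rfl⟩
  have hword : ∀ w : List Unit,
      [a 0] ++ w.map (fun _ => a 1) ++ [a 2] ∈ itineraryLanguage F Subtype.val ↔
        w.length ∈ M := by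
    intro w
    rw [List.map_const', ← exists_block_mem_blockSubshift_iff]
    change (itinerarySet F _ (a 0 :: (List.replicate w.length (a 1) ++ [a 2]))).Nonempty ↔ _
    simp only [itinerarySet, itinerarySet_append, Set.Nonempty, mem_inter_iff, mem_preimage,
      mem_itinerarySet_replicate, List.length_replicate, mem_univ, and_true, a, S, hS,
      mem_ofPred_eq, Subtype.exists, exists_prop]
  have hlang : {u : List Unit | [a 0] ++ u.map (fun _ => a 1) ++ [a 2] ∈
      itineraryLanguage F Subtype.val} = {w : List Unit | w.length ∈ M} := Set.ext hword
  exact hM (hlang ▸ hL.preimage_append_map_append (fun _ => a 1) [a 0] [a 2])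

end BlockSubshift

namespace Discontinuum

variable {A Q B : Type*}

theorem val_zero (u : Discontinuum A Q B) : u.1 0 = Sum.inr (Sum.inl u.state) :=
  u.2.2.1.choose_spec

theorem val_one (u : Discontinuum A Q B) : u.1 1 = Sum.inl u.input :=
  (u.2.1 1 one_pos).choose_spec

theorem state_eq_of_val_zero_eq {u v : Discontinuum A Q B} (h : u.1 0 = v.1 0) :
    u.state = v.state := by
  simpa [val_zero] using h

theorem input_eq_of_val_one_eq {u v : Discontinuum A Q B} (h : u.1 1 = v.1 1) :
    u.input = v.input := by
  simpa [val_one] using h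

def splice (u : Discontinuum A Q B) (K : ℕ) (v : Discontinuum A Q B) (N : ℕ) :
    Discontinuum A Q B :=
  ⟨fun j => if j ≤ K then u.1 j else v.1 (j - K + N), by
    refine ⟨fun j hj => ?_, ?_, fun j hj => ?_⟩
    · dsimp only
      split_ifs
      exacts [u.2.1 j hj, v.2.1 _ (by omega)]
    · simpa using u.2.2.1
    · simpa [show j ≤ K by omega] using u.2.2.2 j hj⟩

theorem splice_val_of_le (u : Discontinuum A Q B) {K : ℕ} (v : Discontinuum A Q B) (N : ℕ)
    {j : ℤ} (hj : j ≤ K) : (u.splice K v N).1 j = u.1 j :=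
  if_pos hj

theorem splice_val_of_lt (u : Discontinuum A Q B) {K : ℕ} (v : Discontinuum A Q B) (N : ℕ)
    {j : ℤ} (hj : K < j) : (u.splice K v N).1 j = v.1 (j - K + N) :=
  if_neg (not_le.2 hj)

theorem exists_eqOn_Icc_iff_of_isClopen [Finite A] [Finite Q] [Finite B]
    {U : Set (Discontinuum A Q B)} (hU : IsClopen U) :
    ∃ N : ℕ, ∀ u v : Discontinuum A Q B, EqOn u.1 v.1 (Icc (-N : ℤ) N) → (u ∈ U ↔ v ∈ U) := by
  let _ : TopologicalSpace (A ⊕ Q ⊕ B) := ⊥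
  have _ : DiscreteTopology (A ⊕ Q ⊕ B) := ⟨rfl⟩
  have hcompact : IsCompact {u : ℤ → A ⊕ Q ⊕ B |
      (∀ i : ℤ, 0 < i → ∃ a : A, u i = Sum.inl a) ∧ (∃ q : Q, u 0 = Sum.inr (Sum.inl q)) ∧
      (∀ i : ℤ, i < 0 → ∃ b : B, u i = Sum.inr (Sum.inr b))} := by
    convert isCompact_univ_pi fun i : ℤ => (Set.toFinite {s : A ⊕ Q ⊕ B |
      (0 < i → ∃ a : A, s = Sum.inl a) ∧ (i = 0 → ∃ q : Q, s = Sum.inr (Sum.inl q)) ∧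
      (i < 0 → ∃ b : B, s = Sum.inr (Sum.inr b))}).isCompact using 1
    ext u
    simp only [mem_univ_pi, mem_ofPred_eq, forall_and, forall_eq]
  have _ : CompactSpace (Discontinuum A Q B) := isCompact_iff_compactSpace.1 hcompact
  exact hU.exists_eqOn_Icc_iff (X := Discontinuum A Q B) IsInducing.subtypeVal

end Discontinuum

section Automaton

variable {A Q B ι : Type*} (fA : Q × A → Q) (fB : Q → B)

theorem autMap_val (u : Discontinuum A Q B) (j : ℤ) :
    (autMap fA fB u).1 j = if j = -1 then Sum.inr (Sum.inr (fB u.state))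
      else if j = 0 then Sum.inr (Sum.inl (fA (u.state, u.input))) else u.1 (j + 1) :=
  rfl

theorem eqOn_autMap {u v : Discontinuum A Q B} {L K : ℤ} (hL : L ≤ 0) (hK : 0 ≤ K)
    (h : EqOn u.1 v.1 (Icc L (K + 1))) :
    EqOn (autMap fA fB u).1 (autMap fA fB v).1 (Icc L K) := by
  have hstate := Discontinuum.state_eq_of_val_zero_eq (h ⟨hL, by omega⟩)
  have hinput := Discontinuum.input_eq_of_val_one_eq (h ⟨by omega, by omega⟩)
  intro j hj
  simp only [autMap_val, hstate, hinput]
  split_ifs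
  · rfl
  · rfl
  · exact h ⟨by linarith [hj.1], by linarith [hj.2]⟩

theorem eqOn_autMap_iterate {u v : Discontinuum A Q B} {L K : ℤ} (hL : L ≤ 0) (hK : 0 ≤ K)
    (n : ℕ) (h : EqOn u.1 v.1 (Icc L (K + n))) :
    EqOn ((autMap fA fB)^[n] u).1 ((autMap fA fB)^[n] v).1 (Icc L K) := by
  induction n generalizing u v with
  | zero => simpa using h
  | succ n ih =>
    refine ih (eqOn_autMap fA fB hL (by omega) ?_)
    simpa [add_assoc] using h

theorem autMap_iterate_val_of_pos (u : Discontinuum A Q B) (n : ℕ) {j : ℤ} (hj : 0 < j) :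
    ((autMap fA fB)^[n] u).1 j = u.1 (j + n) := by
  induction n generalizing j with
  | zero => simp
  | succ n ih =>
    rw [iterate_succ_apply', autMap_val, if_neg (by omega), if_neg (by omega), ih (by omega)]
    push_cast
    ring_nf

theorem eqOn_autMap_iterate_splice {z y : Discontinuum A Q B} {N n : ℕ}
    (h : EqOn ((autMap fA fB)^[n] z).1 y.1 (Icc (-N : ℤ) N)) :
    EqOn ((autMap fA fB)^[n] (z.splice (N + n) y N)).1 y.1 (Ici (-N : ℤ)) := by
  intro j hj
  rcases le_or_gt j 0 with hj0 | hj0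
  · rw [eqOn_autMap_iterate fA fB (L := -N) (K := 0) (by omega) le_rfl n
      (fun i hi => z.splice_val_of_le y N (by push_cast; linarith [hi.2])) ⟨hj, hj0⟩]
    exact h ⟨hj, by omega⟩
  · rw [autMap_iterate_val_of_pos fA fB _ n hj0]
    rcases le_or_gt j N with hjN | hjN
    · rw [z.splice_val_of_le y N (by push_cast; omega),
        ← autMap_iterate_val_of_pos fA fB _ n hj0]
      exact h ⟨by omega, hjN⟩
    · rw [z.splice_val_of_lt y N (by push_cast; omega)]
      push_cast
      ring_nf

variable {V : ι → Set (Discontinuum A Q B)}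

theorem mem_itinerarySet_autMap_congr {N : ℕ}
    (hV : ∀ c u v, EqOn u.1 v.1 (Icc (-N : ℤ) N) → (u ∈ V c ↔ v ∈ V c)) :
    ∀ (w : List ι) {u v : Discontinuum A Q B}, EqOn u.1 v.1 (Icc (-N : ℤ) (N + w.length)) →
      (u ∈ itinerarySet (autMap fA fB) V w ↔ v ∈ itinerarySet (autMap fA fB) V w)
  | [], _, _, _ => Iff.rfl
  | c :: w, u, v, h => by
    simp only [itinerarySet, mem_inter_iff, mem_preimage]
    have hw : EqOn u.1 v.1 (Icc (-N : ℤ) (N + w.length + 1)) := by simpa [add_assoc] using h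
    exact and_congr (hV c u v (hw.mono (Icc_subset_Icc le_rfl (by omega))))
      (mem_itinerarySet_autMap_congr hV w (eqOn_autMap fA fB (by omega) (by omega) hw))

theorem isRegular_itineraryLanguage_autMap [Finite A] [Finite Q] [Finite B] [Finite ι]
    (hV : ∀ c, IsClopen (V c)) : (itineraryLanguage (autMap fA fB) V).IsRegular := by
  choose N hN using fun c => Discontinuum.exists_eqOn_Icc_iff_of_isClopen (hV c)
  obtain ⟨N', hN'⟩ := Finite.exists_le N
  have hV' : ∀ c u v, EqOn u.1 v.1 (Icc (-N' : ℤ) N') → (u ∈ V c ↔ v ∈ V c) := fun c u v h =>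
    hN c u v (h.mono (Icc_subset_Icc (by simp [hN' c]) (by simp [hN' c])))
  refine isRegular_itineraryLanguage_of_finite
    (fun u : Discontinuum A Q B => (Icc (-N' : ℤ) N').domRestrict u.1) ?_
  rintro w _ y ⟨z, hz, rfl⟩ hwin
  have hzy : EqOn ((autMap fA fB)^[w.length] z).1 y.1 (Icc (-N' : ℤ) N') :=
    fun j hj => congrFun hwin ⟨j, hj⟩
  -- Feeding `y`'s unread input to `z` beyond position `N' + |w|` keeps the itinerary of `z`
  -- along `w` and leads to a point that agrees with `y` on `[-N', ∞)`.
  refine ⟨_, ⟨z.splice (N' + w.length) y N', ?_, rfl⟩, fun v hv => ?_⟩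
  · refine (mem_itinerarySet_autMap_congr fA fB hV' w fun j hj => ?_).1 hz
    exact (z.splice_val_of_le y N' (by exact_mod_cast hj.2)).symm
  · exact (mem_itinerarySet_autMap_congr fA fB hV' v
      ((eqOn_autMap_iterate_splice fA fB hzy).mono Icc_subset_Ici_self)).2 hv

end Automaton

theorem IsFactorOfFiniteAutomaton.clopenRegular {Y : Type*} [TopologicalSpace Y] {g : Y → Y}
    (hg : IsFactorOfFiniteAutomaton g) : ClopenRegular g := by
  obtain ⟨A, Q, B, _, _, _, -, -, -, fA, fB, φ, hφc, hφs, hφ⟩ := hg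
  intro α hα hclopen _
  have : Finite α := hα.to_subtype
  rw [genLanguage_eq_itineraryLanguage,
    itineraryLanguage_of_semiconj hφs fun u => (congrFun hφ u).symm]
  exact isRegular_itineraryLanguage_autMap fA fB fun c => (hclopen c c.2).preimage hφc

theorem fixed_limits_not_factor_general (M : Set ℕ)
    (hM : ¬ Language.IsRegular {w : List Unit | w.length ∈ M})
    (X : Set (ℤ → Fin 3))
    (hX : X = {u : ℤ → Fin 3 | (∀ i j : ℤ, i < j → u i ≤ u j) ∧
      ∀ (i : ℤ) (m : ℕ), u i = 0 → (∀ j : ℕ, 1 ≤ j → j ≤ m → u (i + (j : ℤ)) = 1) →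
        u (i + (m : ℤ) + 1) = 2 → m ∈ M}) :
    IsClosed X ∧
    ∃ h : Set.MapsTo (fun (u : ℤ → Fin 3) (i : ℤ) => u (i + 1)) X X,
      (∀ x ∈ X, ∃ c : Fin 3,
        (fun (u : ℤ → Fin 3) (i : ℤ) => u (i + 1)) (fun _ => c) = (fun _ => c) ∧
        omegaSet (fun (u : ℤ → Fin 3) (i : ℤ) => u (i + 1)) {x} = {fun _ => c}) ∧
      ¬ ClopenRegular (Set.MapsTo.restrict _ _ _ h) ∧
      ¬ IsFactorOfFiniteAutomaton (Set.MapsTo.restrict _ _ _ h) := by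
  obtain rfl : X = blockSubshift M := hX
  have hσ := mapsTo_shift_blockSubshift M
  have hnreg := not_clopenRegular_blockSubshift M hM hσ
  refine ⟨isClosed_blockSubshift M, hσ, fun x hx => ?_, hnreg,
    fun hfac => hnreg hfac.clopenRegular⟩
  obtain ⟨c, hc⟩ := (monotone_iff_forall_lt.2 hx.1).exists_eventually_eq
  exact ⟨c, rfl, omegaSet_singleton_of_tendsto (tendsto_shift_iterate hc)⟩

/-- There is a dynamical system in which the ω-limit set of every point is a fixed
point, but which is not a factor of any finite automaton: take a nonregular set `M`
of positive integers and the subshift of nondecreasing sequences over `{0,1,2}`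
whose blocks `0 1^m 2` all have `m ∈ M`. -/
theorem fixed_limits_not_factor (M : Set ℕ) (hpos : ∀ m ∈ M, 0 < m)
    (hM : ¬ Language.IsRegular {w : List Unit | w.length ∈ M})
    (X : Set (ℤ → Fin 3))
    (hX : X = {u : ℤ → Fin 3 | (∀ i j : ℤ, i < j → u i ≤ u j) ∧
      ∀ (i : ℤ) (m : ℕ), u i = 0 → (∀ j : ℕ, 1 ≤ j → j ≤ m → u (i + (j : ℤ)) = 1) →
        u (i + (m : ℤ) + 1) = 2 → m ∈ M}) :
    IsClosed X ∧
    ∃ h : Set.MapsTo (fun (u : ℤ → Fin 3) (i : ℤ) => u (i + 1)) X X,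
      (∀ x ∈ X, ∃ c : Fin 3,
        (fun (u : ℤ → Fin 3) (i : ℤ) => u (i + 1)) (fun _ => c) = (fun _ => c) ∧
        omegaSet (fun (u : ℤ → Fin 3) (i : ℤ) => u (i + 1)) {x} = {fun _ => c}) ∧
      ¬ ClopenRegular (Set.MapsTo.restrict _ _ _ h) ∧
      ¬ IsFactorOfFiniteAutomaton (Set.MapsTo.restrict _ _ _ h) :=
  fixed_limits_not_factor_general M hM X hX
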